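/- Set G^(2) := G^(2)_{SS} + G^(2)_{AA}. Then G^(2) is an idempotent, and Tr(G^(2)) = 2, Tr(G^(2)_{SS}) = 1, Tr(G^(2)_{AA}) = 1, and Tr(Q^(2)) = 1. -/

import Mathlib

/-!
`V^(2)` is the rank-one operator `|Ω⟩⟨Ω|` with `Ω = vec 1` maximally entangled between the
unprimed and the primed pair, so `(E_k ⊗ 1) V^(2) (E_l ⊗ 1) = |vec E_kᵀ⟩⟨vec E_l|`.
Since `E_S`, `E_A` are orthogonal projectors of traces `m_S`, `m_A`, the vectors `vec E_kᵀ`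
and `m_k⁻¹ vec E_k` form dual families, and the `G^(2)_{kk}` are orthogonal rank-one
idempotents of trace one.
-/

open Matrix Kronecker

namespace WBA

/-- Configurations of `p` qudits of local dimension `d`. -/
abbrev Conf (d p : ℕ) := Fin p → Fin d

/-- Operators on `H = (ℂ^d)^{⊗ 2p}`, indexed by pairs (unprimed configuration, primed
configuration). -/
abbrev Op (d p : ℕ) := Matrix (Conf d p × Conf d p) (Conf d p × Conf d p) ℂ

/-- The projector `P⁺_{a,c'}` onto the maximally entangled state between unprimed system `a`
and primed system `c`, tensored with the identity elsewhere. -/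
noncomputable def Pplus (d p : ℕ) (a c : Fin p) : Op d p :=
  Matrix.of fun xy uv =>
    if xy.1 a = xy.2 c ∧ uv.1 a = uv.2 c ∧ (∀ j, j ≠ a → xy.1 j = uv.1 j) ∧
        (∀ j, j ≠ c → xy.2 j = uv.2 j) then
      (d : ℂ)⁻¹
    else 0

/-- `d • P⁺_{a,c'}`, i.e. the partially transposed swap `V^{t_{c'}}_{(a,c')}`. -/
noncomputable def arc (d p : ℕ) (a c : Fin p) : Op d p := (d : ℂ) • Pplus d p a c

/-- `V^(k) = ∏_{j=p-k+1}^{p} (d • P⁺_{j,j'})` (product over the last `k` systems;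
`V^(0) = 1`). -/
noncomputable def Vop (d p k : ℕ) : Op d p :=
  (((List.range p).filter (fun j => decide (p - k ≤ j))).map
    (fun j => if h : j < p then arc d p ⟨j, h⟩ ⟨j, h⟩ else 1)).prod

/-- `Q^(p) = d^{-p} V^(p)` and `Q^(k) = d^{-k} V^(k) - d^{-(k+1)} V^(k+1)` for `k < p`. -/
noncomputable def Qop (d p k : ℕ) : Op d p :=
  if k = p then ((d : ℂ) ^ p)⁻¹ • Vop d p p
  else ((d : ℂ) ^ k)⁻¹ • Vop d p k - ((d : ℂ) ^ (k + 1))⁻¹ • Vop d p (k + 1)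

/-- Permutation matrix on `(ℂ^d)^{⊗ n}`: sends `e_v` to `e_{v ∘ σ⁻¹}`. -/
noncomputable def permMat (d n : ℕ) (σ : Equiv.Perm (Fin n)) :
    Matrix (Fin n → Fin d) (Fin n → Fin d) ℂ :=
  Matrix.of fun x u => if x = u ∘ ⇑σ⁻¹ then 1 else 0

/-- `V_σ`: permutation of the unprimed factors, identity on the primed factors. -/
noncomputable def VL (d p : ℕ) (σ : Equiv.Perm (Fin p)) : Op d p :=
  (permMat d p σ) ⊗ₖ (1 : Matrix (Conf d p) (Conf d p) ℂ)

/-- `V'_τ`: permutation of the primed factors, identity on the unprimed factors. -/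
noncomputable def VR (d p : ℕ) (τ : Equiv.Perm (Fin p)) : Op d p :=
  (1 : Matrix (Conf d p) (Conf d p) ℂ) ⊗ₖ (permMat d p τ)

/-- Identification of `H` with `(ℂ^d)^{⊗ (p+p)}`. -/
def glue (d p : ℕ) : (Conf d p × Conf d p) ≃ (Fin (p + p) → Fin d) :=
  (Equiv.sumArrowEquivProdArrow (Fin p) (Fin p) (Fin d)).symm.trans
    (Equiv.arrowCongr finSumFinEquiv (Equiv.refl (Fin d)))

/-- The permutation operator `W_π`, `π ∈ S_{2p}`, permuting all `2p` tensor factors of `H`. -/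
noncomputable def Wfull (d p : ℕ) (π : Equiv.Perm (Fin (p + p))) : Op d p :=
  (permMat d (p + p) π).submatrix (glue d p) (glue d p)

/-- Partial transpose over the `p` primed factors:
`⟨x,y|M^Γ|u,v⟩ = ⟨x,v|M|u,y⟩`. -/
noncomputable def ptrans (d p : ℕ) (M : Op d p) : Op d p :=
  Matrix.of fun xy uv => M (xy.1, uv.2) (uv.1, xy.2)

/-- The algebra `A^d_{p,p}` of partially transposed permutation operators, as a
linear subspace of `End(H)`. -/
noncomputable def Apt (d p : ℕ) : Submodule ℂ (Op d p) :=
  Submodule.span ℂ {M | ∃ π : Equiv.Perm (Fin (p + p)), M = ptrans d p (Wfull d p π)}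

/-- Extension of an operator on systems `1,…,p-r,1',…,(p-r)'` by the identity on the
remaining systems. -/
noncomputable def embed (d p r : ℕ) (M : Op d (p - r)) : Op d p :=
  Matrix.of fun xy uv =>
    M (xy.1 ∘ Fin.castLE (Nat.sub_le p r), xy.2 ∘ Fin.castLE (Nat.sub_le p r))
      (uv.1 ∘ Fin.castLE (Nat.sub_le p r), uv.2 ∘ Fin.castLE (Nat.sub_le p r)) *
    (if ∀ j : Fin p, p - r ≤ (j : ℕ) → xy.1 j = uv.1 j ∧ xy.2 j = uv.2 j then 1 else 0)

/-- The ideal `M̃^(k) = span{ V_σ V'_τ Q^(k) V_π V'_ρ }` of `A^d_{p,p}`. -/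
noncomputable def Mtil (d p k : ℕ) : Submodule ℂ (Op d p) :=
  Submodule.span ℂ {M | ∃ σ τ π ρ : Equiv.Perm (Fin p),
    M = VL d p σ * VR d p τ * Qop d p k * (VL d p π * VR d p ρ)}

/-- Labels for the two irreps of `S_2`: symmetric `S` and antisymmetric `A`. -/
inductive SA
  | S
  | A
deriving DecidableEq

instance : Fintype SA := ⟨{SA.S, SA.A}, fun x => by cases x <;> simp⟩

/-- The swap operator on `ℂ^d ⊗ ℂ^d`. -/
noncomputable def Fsw (d : ℕ) : Matrix (Conf d 2) (Conf d 2) ℂ :=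
  Matrix.of fun x u => if x 0 = u 1 ∧ x 1 = u 0 then 1 else 0

/-- Symmetric and antisymmetric projectors on `ℂ^d ⊗ ℂ^d`. -/
noncomputable def Esm (d : ℕ) : SA → Matrix (Conf d 2) (Conf d 2) ℂ
  | SA.S => (2 : ℂ)⁻¹ • (1 + Fsw d)
  | SA.A => (2 : ℂ)⁻¹ • (1 - Fsw d)

/-- `E_i ⊗ E_j` on `H = (ℂ^d)^{⊗4}`. -/
noncomputable def EE (d : ℕ) (i j : SA) : Op d 2 := (Esm d i) ⊗ₖ (Esm d j)

/-- `E_i ⊗ 1` on `H = (ℂ^d)^{⊗4}`. -/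
noncomputable def EId (d : ℕ) (i : SA) : Op d 2 :=
  (Esm d i) ⊗ₖ (1 : Matrix (Conf d 2) (Conf d 2) ℂ)

/-- Multiplicities `m_S = d(d+1)/2`, `m_A = d(d-1)/2` (real valued). -/
noncomputable def mR (d : ℕ) : SA → ℝ
  | SA.S => (d : ℝ) * ((d : ℝ) + 1) / 2
  | SA.A => (d : ℝ) * ((d : ℝ) - 1) / 2

/-- Multiplicities `m_S = d(d+1)/2`, `m_A = d(d-1)/2` (complex valued). -/
noncomputable def mC (d : ℕ) : SA → ℂ
  | SA.S => (d : ℂ) * ((d : ℂ) + 1) / 2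
  | SA.A => (d : ℂ) * ((d : ℂ) - 1) / 2

/-- `V^(1) = d • P⁺_{2,2'}` for `p = 2`. -/
noncomputable def V1 (d : ℕ) : Op d 2 := arc d 2 1 1

/-- `V^(2) = d² • P⁺_{2,2'} P⁺_{1,1'}` for `p = 2`. -/
noncomputable def V2 (d : ℕ) : Op d 2 := arc d 2 1 1 * arc d 2 0 0

/-- `Q^(2) = d^{-2} V^(2)` for `p = 2`. -/
noncomputable def Q2 (d : ℕ) : Op d 2 := ((d : ℂ) ^ 2)⁻¹ • V2 d

/-- `Q^(1) = d^{-1} V^(1) - d^{-2} V^(2)` for `p = 2`. -/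
noncomputable def Q1 (d : ℕ) : Op d 2 :=
  (d : ℂ)⁻¹ • V1 d - ((d : ℂ) ^ 2)⁻¹ • V2 d

/-- `G^(2)_{kl} = (d²/√(m_k m_l)) (E_k ⊗ 1) Q^(2) (E_l ⊗ 1)`. -/
noncomputable def G2 (d : ℕ) (k l : SA) : Op d 2 :=
  ((d : ℂ) ^ 2 / ((Real.sqrt (mR d k * mR d l) : ℝ) : ℂ)) • (EId d k * Q2 d * EId d l)

/-- `G^(2) = G^(2)_{SS} + G^(2)_{AA}`. -/
noncomputable def G2sum (d : ℕ) : Op d 2 := G2 d SA.S SA.S + G2 d SA.A SA.A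

/-- The Gram coefficients `b_{SS} = (d+2)/(4d)`, `b_{SA} = b_{AS} = 1/4`,
`b_{AA} = (d-2)/(4d)`. -/
noncomputable def bc (d : ℕ) : SA → SA → ℂ
  | SA.S, SA.S => ((d : ℂ) + 2) / (4 * (d : ℂ))
  | SA.S, SA.A => 1 / 4
  | SA.A, SA.S => 1 / 4
  | SA.A, SA.A => ((d : ℂ) - 2) / (4 * (d : ℂ))

/-- `Ĝ^(1)_{[ij][kl]} = (E_i ⊗ E_j) Q^(1) (E_k ⊗ E_l)`. -/
noncomputable def Ghat1 (d : ℕ) (i j k l : SA) : Op d 2 :=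
  EE d i j * Q1 d * EE d k l

/-- `G^(1)_{[ij][kl]} = b_{ij}⁻¹ Ĝ^(1)_{[ij][kl]}`. -/
noncomputable def G1 (d : ℕ) (i j k l : SA) : Op d 2 := (bc d i j)⁻¹ • Ghat1 d i j k l

/-- `G^(1) = Σ_{ij} G^(1)_{[ij][ij]}`. -/
noncomputable def G1sum (d : ℕ) : Op d 2 := ∑ i : SA, ∑ j : SA, G1 d i j i j

/-- `G^(0)_{ij} = E_i⊗E_j - b_{ij}⁻¹ (E_i⊗E_j)Q^(1)(E_i⊗E_j)
- δ_{ij} (d²/m_i) (E_i⊗1)Q^(2)(E_i⊗1)`. -/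
noncomputable def G0 (d : ℕ) (i j : SA) : Op d 2 :=
  EE d i j - (bc d i j)⁻¹ • (EE d i j * Q1 d * EE d i j) -
    (if i = j then (d : ℂ) ^ 2 / mC d i else 0) • (EId d i * Q2 d * EId d i)

section RankOne
variable {ι m R : Type*} [Fintype m] [DecidableEq m]

theorem orthogonalIdempotents_vecMulVec [DecidableEq ι] [Semiring R] (u v : ι → m → R)
    (h : ∀ i j, v i ⬝ᵥ u j = if i = j then 1 else 0) :
    OrthogonalIdempotents fun i => vecMulVec (u i) (v i) :=
  OrthogonalIdempotents.iff_mul_eq.mpr fun i j => by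
    rw [vecMulVec_mul_vecMulVec, h]
    split_ifs with hij
    · subst hij; simp
    · simp

theorem kronecker_one_mul_vecMulVec_vec_one_mul [CommSemiring R] (A B : Matrix m m R) :
    (A ⊗ₖ 1) * vecMulVec (vec 1) (vec 1) * (B ⊗ₖ 1) = vecMulVec (vec Aᵀ) (vec B) := by
  rw [mul_vecMulVec, vecMulVec_mul, kronecker_mulVec_vec, vec_vecMul_kronecker]
  simp

end RankOne

section TwoQudits
variable {d : ℕ}

lemma sum_conf_two {M : Type*} [AddCommMonoid M] (f : Conf d 2 → M) :
    ∑ x, f x = ∑ a, ∑ b, f ![a, b] := by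
  rw [← Fintype.sum_prod_type', ← (piFinTwoEquiv fun _ => Fin d).symm.sum_comp]
  rfl

lemma fsw_mul_fsw : Fsw d * Fsw d = 1 := by
  ext x u
  simp only [Fsw, mul_apply, of_apply, sum_conf_two, one_apply, funext_iff, Fin.forall_fin_two]
  simp [ite_and]

lemma trace_fsw : trace (Fsw d) = d := by
  simp only [trace, diag, Fsw, of_apply, sum_conf_two]
  simp [and_iff_left_of_imp Eq.symm]

lemma orthogonalIdempotents_esm : OrthogonalIdempotents (Esm d) := by
  refine OrthogonalIdempotents.iff_mul_eq.mpr fun k l => ?_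
  cases k <;> cases l <;>
    simp only [Esm, Matrix.smul_mul, Matrix.mul_smul, mul_add, add_mul, mul_sub, sub_mul,
      fsw_mul_fsw, one_mul, mul_one, reduceCtorEq, if_true, if_false] <;>
    module

lemma trace_esm (k : SA) : trace (Esm d k) = mC d k := by
  cases k <;> simp [Esm, mC, trace_fsw] <;> ring

lemma mR_pos (hd : 2 ≤ d) (k : SA) : 0 < mR d k := by
  have hd' : (2 : ℝ) ≤ d := by exact_mod_cast hd
  cases k <;> simp only [mR] <;> nlinarith

lemma ofReal_mR (k : SA) : (mR d k : ℂ) = mC d k := by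
  cases k <;> simp [mR, mC]

lemma mC_ne_zero (hd : 2 ≤ d) (k : SA) : mC d k ≠ 0 := by
  rw [← ofReal_mR]
  exact_mod_cast (mR_pos hd k).ne'

lemma sqrt_mR_mul_self (hd : 2 ≤ d) (k : SA) : ((√(mR d k * mR d k) : ℝ) : ℂ) = mC d k := by
  rw [Real.sqrt_mul_self (mR_pos hd k).le, ofReal_mR]

lemma inv_mC_smul_vec_esm_dotProduct (hd : 2 ≤ d) (k l : SA) :
    ((mC d k)⁻¹ • vec (Esm d k)) ⬝ᵥ vec (Esm d l)ᵀ = if k = l then 1 else 0 := by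
  rw [smul_dotProduct, vec_dotProduct_vec, ← transpose_mul, trace_transpose,
    orthogonalIdempotents_esm.mul_eq]
  rcases eq_or_ne k l with rfl | hkl
  · simp [trace_esm, mC_ne_zero hd k]
  · simp [hkl, hkl.symm]

lemma V2_eq_vecMulVec (hd : d ≠ 0) :
    V2 d = vecMulVec (vec (1 : Matrix (Conf d 2) (Conf d 2) ℂ)) (vec 1) := by
  ext ⟨x, y⟩ ⟨u, v⟩
  have hd' : (d : ℂ) ≠ 0 := by exact_mod_cast hd
  -- only the intermediate index `(![x 0, u 1], ![y 0, v 1])` contributes to the product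
  simp only [V2, arc, Pplus, mul_apply, Fintype.sum_prod_type, Matrix.smul_apply, of_apply,
    Fin.forall_fin_two, sum_conf_two]
  simp only [vecMulVec_apply, vec, one_apply, funext_iff, Fin.forall_fin_two]
  simp [hd', ite_and]
  split_ifs <;> simp_all

lemma trace_Q2 (hd : d ≠ 0) : trace (Q2 d) = 1 := by
  have hd' : (d : ℂ) ≠ 0 := by exact_mod_cast hd
  rw [Q2, V2_eq_vecMulVec hd, trace_smul, trace_vecMulVec, vec_dotProduct_vec]
  simp [hd']

lemma G2_self_eq_vecMulVec (hd : 2 ≤ d) (k : SA) :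
    G2 d k k = vecMulVec (vec (Esm d k)ᵀ) ((mC d k)⁻¹ • vec (Esm d k)) := by
  have hd' : (d : ℂ) ≠ 0 := by exact_mod_cast (by omega : d ≠ 0)
  rw [G2, EId, Q2, V2_eq_vecMulVec (by omega), Matrix.mul_smul, Matrix.smul_mul,
    kronecker_one_mul_vecMulVec_vec_one_mul, smul_smul, vecMulVec_smul, sqrt_mR_mul_self hd]
  congr 1
  field_simp

end TwoQudits

/-- `G^(2) := G^(2)_{SS} + G^(2)_{AA}` is an idempotent, and
`Tr G^(2) = 2`, `Tr G^(2)_{SS} = 1`, `Tr G^(2)_{AA} = 1`, `Tr Q^(2) = 1`. -/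
theorem G2_projector_traces (d : ℕ) (hd : 2 ≤ d) :
    G2sum d * G2sum d = G2sum d ∧
    Matrix.trace (G2sum d) = 2 ∧
    Matrix.trace (G2 d SA.S SA.S) = 1 ∧
    Matrix.trace (G2 d SA.A SA.A) = 1 ∧
    Matrix.trace (Q2 d) = 1 := by
  have htr (k : SA) : trace (G2 d k k) = 1 := by
    rw [G2_self_eq_vecMulVec hd, trace_vecMulVec, dotProduct_comm,
      inv_mC_smul_vec_esm_dotProduct hd, if_pos rfl]
  refine ⟨?_, by rw [G2sum, trace_add, htr, htr]; norm_num, htr _, htr _, trace_Q2 (by omega)⟩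
  have hsum : G2sum d = ∑ k, G2 d k k :=
    (Finset.sum_pair (f := fun k => G2 d k k) (by decide : SA.S ≠ SA.A)).symm
  rw [hsum]
  simp_rw [G2_self_eq_vecMulVec hd]
  exact (orthogonalIdempotents_vecMulVec _ _
    (inv_mC_smul_vec_esm_dotProduct hd)).isIdempotentElem_sum.eq

end WBA
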